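/- Deduction theorem for know-how entailment: for any PL-formula α and any sets Γ, Γ' of PL-formulas with Γ finite and nonempty, Kh(Γ' ∪ Γ) ⊨ Kh α if and only if Kh Γ' ⊨ Kh(⋀_{γ∈Γ} γ → α), where Kh Δ = {Kh δ : δ ∈ Δ} and ⋀_{γ∈Γ} γ is the conjunction of the members of Γ. -/

import Mathlib

/-- Formulas of the propositional language `PL` over atoms `P`. -/
inductive PLForm (P : Type) : Type
  | atom : P → PLForm P
  | bot  : PLForm P
  | and  : PLForm P → PLForm P → PLForm P
  | or   : PLForm P → PLForm P → PLForm P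
  | imp  : PLForm P → PLForm P → PLForm P

/-- `¬α` abbreviates `α → ⊥`. -/
def PLForm.neg {P : Type} (α : PLForm P) : PLForm P := α.imp .bot

/-- The resolution space `S(α)`, realized as a type: `S(p)` and `S(⊥)` are
singletons, `S(α∨β)` is the disjoint union, `S(α∧β)` the product, and
`S(α→β)` the full function space. -/
def RS (P : Type) : PLForm P → Type
  | .atom _  => Unit
  | .bot     => Unit
  | .or a b  => RS P a ⊕ RS P b
  | .and a b => RS P a × RS P b
  | .imp a b => RS P a → RS P b

/-- An epistemic (information) model over atoms `P` with worlds `W`: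
`W` is nonempty and `V` a valuation. -/
structure Model (P W : Type) where
  ne : Nonempty W
  V : W → Set P

/-- The actual resolutions `R(w,α) ⊆ S(α)` at a world `w`. -/
def Res {P W : Type} (M : Model P W) (w : W) : (α : PLForm P) → Set (RS P α)
  | .atom p  => {_u : Unit | p ∈ M.V w}
  | .bot     => ∅
  | .or a b  => (Sum.inl '' Res M w a) ∪ (Sum.inr '' Res M w b)
  | .and a b => (Res M w a) ×ˢ (Res M w b)
  | .imp a b => {f : RS P a → RS P b | f '' Res M w a ⊆ Res M w b}

/-- Formulas of the dynamic epistemic language `DELKh`. -/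
inductive DForm (P : Type) : Type
  | atom : P → DForm P
  | bot  : DForm P
  | and  : DForm P → DForm P → DForm P
  | or   : DForm P → DForm P → DForm P
  | imp  : DForm P → DForm P → DForm P
  | K    : DForm P → DForm P
  | box  : DForm P → DForm P
  | kh   : PLForm P → DForm P

def DForm.neg {P : Type} (φ : DForm P) : DForm P := φ.imp .bot
def DForm.dia {P : Type} (φ : DForm P) : DForm P := (DForm.box φ.neg).neg
def DForm.biImp {P : Type} (φ ψ : DForm P) : DForm P := (φ.imp ψ).and (ψ.imp φ)

/-- Embedding of `PL` into `DELKh`. -/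
def PLForm.toD {P : Type} : PLForm P → DForm P
  | .atom p  => .atom p
  | .bot     => .bot
  | .and a b => (toD a).and (toD b)
  | .or a b  => (toD a).or (toD b)
  | .imp a b => (toD a).imp (toD b)

/-- The submodel of `M` determined by a nonempty set `s` of worlds,
with the restricted valuation. -/
def Model.restrict {P W : Type} (M : Model P W) (s : Set W) (h : s.Nonempty) :
    Model P s :=
  { ne := ⟨⟨h.choose, h.choose_spec⟩⟩, V := fun w => M.V w.1 }

/-- Satisfaction of `DELKh`-formulas at a pointed model `(M,w)`. -/
def Sat (P : Type) : (W : Type) → Model P W → W → DForm P → Prop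
  | _, M, w, .atom p  => p ∈ M.V w
  | _, _, _, .bot     => False
  | W, M, w, .and a b => Sat P W M w a ∧ Sat P W M w b
  | W, M, w, .or a b  => Sat P W M w a ∨ Sat P W M w b
  | W, M, w, .imp a b => Sat P W M w a → Sat P W M w b
  | W, M, _, .K φ     => ∀ v : W, Sat P W M v φ
  | W, M, w, .box φ   =>
      ∀ (s : Set W) (h : w ∈ s), Sat P s (M.restrict s ⟨w, h⟩) ⟨w, h⟩ φ
  | W, M, _, .kh α    => ∃ x : RS P α, ∀ v : W, x ∈ Res M v α

/-- A `DELKh`-formula is valid if it holds at every pointed model. -/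
def Valid {P : Type} (φ : DForm P) : Prop :=
  ∀ (W : Type) (M : Model P W) (w : W), Sat P W M w φ

/-- Semantic entailment from a set of `DELKh`-formulas. -/
def EntailsSet {P : Type} (Γ : Set (DForm P)) (φ : DForm P) : Prop :=
  ∀ (W : Type) (M : Model P W) (w : W),
    (∀ ψ ∈ Γ, Sat P W M w ψ) → Sat P W M w φ

/-- Classical satisfaction of `PL`-formulas at a pointed model. -/
def PLSat {P W : Type} (M : Model P W) (w : W) : PLForm P → Prop
  | .atom p  => p ∈ M.V w
  | .bot     => False
  | .and a b => PLSat M w a ∧ PLSat M w b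
  | .or a b  => PLSat M w a ∨ PLSat M w b
  | .imp a b => PLSat M w a → PLSat M w b

/-- Inquisitive support of `PL`-formulas at a state `s` of a model `M`. -/
def Support (P W : Type) (M : Model P W) : Set W → PLForm P → Prop
  | s, .atom p  => ∀ w ∈ s, p ∈ M.V w
  | s, .bot     => s = ∅
  | s, .and a b => Support P W M s a ∧ Support P W M s b
  | s, .or a b  => Support P W M s a ∨ Support P W M s b
  | s, .imp a b => ∀ t ⊆ s, Support P W M t a → Support P W M t b

/-- The conjunction of the members of a (nonempty) finite list of formulas. -/
def bigAnd {P : Type} : List (PLForm P) → PLForm P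
  | []        => PLForm.bot.imp .bot
  | [a]       => a
  | a :: rest => a.and (bigAnd rest)

/-! The right-to-left direction is modus ponens for `Kh`, together with the fact that
`Kh (⋀Γ)` amounts to `Kh γ` for every `γ ∈ Γ`. For the converse, fix a model satisfying
`Kh Γ'` and a potential resolution `X` of `⋀Γ`. On the submodel of the worlds where `X`
actually resolves `⋀Γ`, every `Kh γ` with `γ ∈ Γ` holds, and so does `Kh Γ'`, since
know-how is preserved under submodels; the hypothesis then yields a resolution `y X` of `α`
that is uniform over that submodel. The map `X ↦ y X` is a uniform resolution of
`⋀Γ → α` in the whole model. -/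

instance RS.instNonempty {P : Type} : (α : PLForm P) → Nonempty (RS P α)
  | .atom _ | .bot => ⟨()⟩
  | .and a b =>
    have := RS.instNonempty a; have := RS.instNonempty b; inferInstanceAs (Nonempty (_ × _))
  | .or a _ => have := RS.instNonempty a; inferInstanceAs (Nonempty (_ ⊕ _))
  | .imp _ b => have := RS.instNonempty b; inferInstanceAs (Nonempty (_ → _))

section Kh

variable {P W : Type} (M : Model P W)

theorem res_restrict (s : Set W) (hs : s.Nonempty) (u : s) (α : PLForm P) :
    Res (M.restrict s hs) u α = Res M u α := by
  induction α with
  | atom | bot => rfl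
  | and a b iha ihb => simp only [Res, iha, ihb]; rfl
  | or a b iha ihb | imp a b iha ihb => simp only [Res, iha, ihb]

theorem sat_kh_restrict_iff (s : Set W) (hs : s.Nonempty) (u : s) (α : PLForm P) :
    Sat P s (M.restrict s hs) u (.kh α) ↔ ∃ x : RS P α, ∀ v ∈ s, x ∈ Res M v α := by
  simp only [Sat, res_restrict, Subtype.forall]

variable {M} {w : W}

theorem sat_kh_and {a b : PLForm P} :
    Sat P W M w (.kh (a.and b)) ↔ Sat P W M w (.kh a) ∧ Sat P W M w (.kh b) := by
  constructor
  · rintro ⟨⟨x, y⟩, h⟩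
    exact ⟨⟨x, fun v => (h v).1⟩, ⟨y, fun v => (h v).2⟩⟩
  · rintro ⟨⟨x, hx⟩, ⟨y, hy⟩⟩
    exact ⟨(x, y), fun v => ⟨hx v, hy v⟩⟩

theorem sat_kh_bigAnd (Γ : List (PLForm P)) :
    Sat P W M w (.kh (bigAnd Γ)) ↔ ∀ γ ∈ Γ, Sat P W M w (.kh γ) := by
  induction Γ using bigAnd.induct with
  -- `bigAnd [] = ⊥ → ⊥`, which `id` resolves at every world.
  | case1 => simpa using ⟨id, fun _ _ => by simp [Res]⟩
  | case2 a => simp [bigAnd]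
  | case3 a rest hrest ih => rw [bigAnd.eq_3 a rest hrest, sat_kh_and, ih, List.forall_mem_cons]

theorem sat_kh_mp {a b : PLForm P} (hab : Sat P W M w (.kh (a.imp b)))
    (ha : Sat P W M w (.kh a)) : Sat P W M w (.kh b) := by
  obtain ⟨f, hf⟩ := hab
  obtain ⟨x, hx⟩ := ha
  exact ⟨f x, fun v => hf v ⟨x, hx v, rfl⟩⟩

end Kh

theorem EntailsSet.mono {P : Type} {Γ Δ : Set (DForm P)} {φ : DForm P} (h : EntailsSet Γ φ)
    (hΓΔ : Γ ⊆ Δ) : EntailsSet Δ φ :=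
  fun W M w hΔ => h W M w fun ψ hψ => hΔ ψ (hΓΔ hψ)

theorem kh_deduction_theorem_general {P : Type} (Γ' : Set (PLForm P))
    (Γ : List (PLForm P)) (α : PLForm P) :
    EntailsSet (DForm.kh '' (Γ' ∪ {γ | γ ∈ Γ})) (.kh α) ↔
      EntailsSet (DForm.kh '' Γ') (.kh ((bigAnd Γ).imp α)) := by
  constructor
  · intro h W M w hΓ'
    have hres : ∀ X : RS P (bigAnd Γ), ∃ y : RS P α,
        ∀ v, X ∈ Res M v (bigAnd Γ) → y ∈ Res M v α := by
      intro X
      set s := {v | X ∈ Res M v (bigAnd Γ)}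
      rcases s.eq_empty_or_nonempty with hs | hs
      · exact ⟨Classical.arbitrary _, fun v hv => (hs.subset hv).elim⟩
      refine (sat_kh_restrict_iff M s hs _ α).1 (h s _ ⟨_, hs.some_mem⟩ ?_)
      rintro _ ⟨γ, hγ | hγ, rfl⟩
      · obtain ⟨x, hx⟩ := hΓ' _ (Set.mem_image_of_mem _ hγ)
        exact (sat_kh_restrict_iff M s hs _ γ).2 ⟨x, fun v _ => hx v⟩
      · exact (sat_kh_bigAnd Γ).1
          ((sat_kh_restrict_iff M s hs _ _).2 ⟨X, fun _ hv => hv⟩) γ hγ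
    choose f hf using hres
    exact ⟨f, fun v => Set.image_subset_iff.2 fun X hX => hf X v hX⟩
  · intro h W M w hΓ'Γ
    refine sat_kh_mp (h.mono (Set.image_mono Set.subset_union_left) W M w hΓ'Γ) ?_
    exact (sat_kh_bigAnd Γ).2 fun γ hγ => hΓ'Γ _ ⟨γ, Or.inr hγ, rfl⟩

/-- deduction theorem for know-how entailment:
for finite nonempty `Γ` (given as a list) and any set `Γ'`,
`Kh(Γ' ∪ Γ) ⊨ Kh α` iff `Kh Γ' ⊨ Kh(⋀Γ → α)`. -/
theorem kh_deduction_theorem {P : Type} [Countable P] (Γ' : Set (PLForm P))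
    (Γ : List (PLForm P)) (hΓ : Γ ≠ []) (α : PLForm P) :
    EntailsSet (DForm.kh '' (Γ' ∪ {γ | γ ∈ Γ})) (.kh α) ↔
      EntailsSet (DForm.kh '' Γ') (.kh ((bigAnd Γ).imp α)) :=
  kh_deduction_theorem_general Γ' Γ α
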